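/- For every fixed n ≥ 1, the survivors of the first n stages of the model sieve have natural density d n = ∏_{i=1}^{n} (1 − 1/(x i)); that is, L n t / t tends to ∏_{i=1}^{n} (1 − 1/(x i)) as t → ∞ (as real numbers). -/

import Mathlib

/-!
With `P n = ∏ x i` and `Q n = ∏ (x i - 1)`: the enumeration `g_x` sends `k + (x - 1)` to
`g_x k + x`, so induction on `n` gives `f n (k + Q n) = f n k + P n`, i.e. the survivors are
periodic modulo `P n` with `Q n` of them in each period. As `f n 0 = 1`, this yields
`L n (t + P n) = L n t + Q n` for every `t`, so `L n t - (Q n / P n) t` is periodic, hence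
bounded, and `L n t / t → Q n / P n`.
-/
/-- `gx x` is the 0-indexed strictly increasing enumeration of `{k : ℕ | k % x ≠ 1}`. -/
noncomputable def gx (x : ℕ) : ℕ → ℕ := Nat.nth (fun k => k % x ≠ 1)

/-- `modelF n` is the 0-indexed strictly increasing enumeration of the integers surviving
`n` stages of the model sieve:  `modelF 0 k = k + 1` and
`modelF (n+1) k = modelF n (gx (modelX (n+1)) k)` where `modelX (n+1) = modelF n 1`. -/
noncomputable def modelF : ℕ → ℕ → ℕ
  | 0, k => k + 1
  | n + 1, k => modelF n (gx (modelF n 1) k)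

/-- `modelX n` is the `n`-th model prime (`modelX 1 = 2, modelX 2 = 3, modelX 3 = 5, ...`). -/
noncomputable def modelX (n : ℕ) : ℕ := modelF (n - 1) 1

/-- `Lcount n t` is the number of survivors of the first `n` stages of the model sieve
that are `≤ t`. -/
noncomputable def Lcount (n t : ℕ) : ℕ := Set.ncard {k : ℕ | modelF n k ≤ t}

open Filter Topology Finset

lemma map_add_mul_of_map_add {f : ℕ → ℕ} {q p : ℕ} (h : ∀ k, f (k + q) = f k + p)
    (m k : ℕ) :
    f (k + m * q) = f k + m * p := by
  induction m with
  | zero => simp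
  | succ m ih => rw [add_one_mul, ← add_assoc, h, ih, add_one_mul, add_assoc]

theorem tendsto_div_of_map_add {N : ℕ → ℝ} {p : ℕ} (hp : 0 < p) {q : ℝ}
    (h : ∀ t, N (t + p) = N t + q) : Tendsto (fun t : ℕ => N t / t) atTop (𝓝 (q / p)) := by
  set g : ℕ → ℝ := fun t => N t - q / p * t
  have hp' : (p : ℝ) ≠ 0 := by positivity
  have hg : Function.Periodic g p := fun t => by
    simp only [g, h, Nat.cast_add]
    field_simp
    ring
  have hbdd : IsBoundedUnder (· ≤ ·) atTop fun t => ‖g t‖ := by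
    refine isBoundedUnder_of ⟨∑ r ∈ range p, ‖g r‖, fun t => ?_⟩
    rw [← hg.map_mod_nat t]
    exact single_le_sum (fun r _ => norm_nonneg (g r)) (mem_range.2 (Nat.mod_lt t hp))
  have hdev : Tendsto (fun t : ℕ => (t : ℝ)⁻¹ * g t) atTop (𝓝 0) :=
    tendsto_inv_atTop_nhds_zero_nat.zero_mul_isBoundedUnder_le hbdd
  have hlim := hdev.const_add (q / p)
  rw [add_zero] at hlim
  refine hlim.congr' ?_
  filter_upwards [eventually_ne_atTop 0] with t ht
  simp only [g]
  field_simp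
  ring

theorem ncard_setOf_le_add_of_map_add {f : ℕ → ℕ} (hf : StrictMono f) {q p : ℕ}
    (h : ∀ k, f (k + q) = f k + p) {t : ℕ} (ht : f 0 ≤ t + 1) :
    {k | f k ≤ t + p}.ncard = {k | f k ≤ t}.ncard + q := by
  have hfin : {k | f k ≤ t}.Finite := (Set.finite_Iic t).subset fun k hk => hf.le_apply.trans hk
  have hsplit : {k | f k ≤ t + p} = (· + q) '' {k | f k ≤ t} ∪ Set.Iio q := by
    ext k
    simp only [Set.mem_union, Set.mem_image, Set.mem_ofPred_eq, Set.mem_Iio]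
    constructor
    · intro hk
      rcases lt_or_ge k q with hkq | hkq
      · exact Or.inr hkq
      · obtain ⟨j, rfl⟩ := Nat.exists_eq_add_of_le' hkq
        exact Or.inl ⟨j, by rw [h] at hk; omega, rfl⟩
    · rintro (⟨j, hj, rfl⟩ | hkq)
      · rw [h]; omega
      · have hfq : f q = f 0 + p := by simpa using h 0
        have := hf hkq
        omega
  have hdisj : Disjoint ((· + q) '' {k | f k ≤ t}) (Set.Iio q) :=
    Set.disjoint_left.2 fun _ ⟨_, _, hj⟩ hk => by simp only [← hj, Set.mem_Iio] at hk; omega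
  rw [hsplit, Set.ncard_union_eq hdisj (hfin.image _),
    Set.ncard_image_of_injective _ (add_left_injective q), ← coe_Iio, Set.ncard_coe_finset,
    Nat.card_Iio]

section EnumerationModX

variable {x : ℕ}

lemma infinite_setOf_mod_ne_one (hx : 2 ≤ x) : {k : ℕ | k % x ≠ 1}.Infinite :=
  Set.infinite_of_forall_exists_gt fun a => ⟨x * (a + 1), by simp, by nlinarith⟩

lemma gx_strictMono (hx : 2 ≤ x) : StrictMono (gx x) :=
  Nat.nth_strictMono (infinite_setOf_mod_ne_one hx)

lemma gx_zero : gx x 0 = 0 :=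
  Nat.nth_zero_of_zero (by simp)

lemma count_mod_ne_one_self (hx : 2 ≤ x) : Nat.count (fun k => k % x ≠ 1) x = x - 1 := by
  rw [Nat.count_eq_card_filter_range, filter_congr fun k hk => by
    rw [Nat.mod_eq_of_lt (mem_range.1 hk)], filter_ne', card_erase_of_mem (by simp; omega),
    card_range]

lemma gx_add (hx : 2 ≤ x) (k : ℕ) : gx x (k + (x - 1)) = gx x k + x := by
  have hinf := infinite_setOf_mod_ne_one hx
  have hcount : Nat.count (fun k => k % x ≠ 1) (x + gx x k) = x - 1 + k := by
    simp only [Nat.count_add, Nat.add_mod_left, count_mod_ne_one_self hx, gx,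
      Nat.count_nth_of_infinite hinf]
  have hmem : (x + gx x k) % x ≠ 1 := by
    rw [Nat.add_mod_left]; exact Nat.nth_mem_of_infinite hinf k
  rw [add_comm k, ← hcount, add_comm (gx x k)]
  exact Nat.nth_count hmem

end EnumerationModX

lemma modelX_succ (n : ℕ) : modelX (n + 1) = modelF n 1 := rfl

lemma modelF_zero_right (n : ℕ) : modelF n 0 = 1 := by
  induction n with
  | zero => rfl
  | succ n ih => rw [modelF, gx_zero, ih]

lemma modelF_strictMono (n : ℕ) : StrictMono (modelF n) := by
  induction n with
  | zero => exact fun a b h => by simpa [modelF] using h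
  | succ n ih =>
    exact ih.comp (gx_strictMono ((modelF_zero_right n).symm.trans_lt (ih zero_lt_one)))

lemma two_le_modelX {i : ℕ} (hi : 1 ≤ i) : 2 ≤ modelX i := by
  obtain ⟨n, rfl⟩ := Nat.exists_eq_add_of_le' hi
  exact (modelF_zero_right n).symm.trans_lt (modelF_strictMono n zero_lt_one)

lemma modelF_add_prod (n k : ℕ) :
    modelF n (k + ∏ i ∈ Icc 1 n, (modelX i - 1)) =
      modelF n k + ∏ i ∈ Icc 1 n, modelX i := by
  induction n generalizing k with
  | zero => simp [modelF]
  | succ n ih =>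
    rw [prod_Icc_succ_top (by omega), prod_Icc_succ_top (by omega), modelX_succ, modelF,
      modelF, map_add_mul_of_map_add (gx_add (modelX_succ n ▸ two_le_modelX (by omega))),
      mul_comm, map_add_mul_of_map_add ih, mul_comm]

lemma Lcount_add_prod (n t : ℕ) :
    Lcount n (t + ∏ i ∈ Icc 1 n, modelX i) = Lcount n t + ∏ i ∈ Icc 1 n, (modelX i - 1) :=
  ncard_setOf_le_add_of_map_add (modelF_strictMono n) (modelF_add_prod n)
    (by rw [modelF_zero_right]; omega)

lemma prod_one_sub_one_div_modelX (n : ℕ) :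
    ∏ i ∈ Icc 1 n, (1 - 1 / (modelX i : ℝ)) =
      ((∏ i ∈ Icc 1 n, (modelX i - 1) : ℕ) : ℝ) /
        ((∏ i ∈ Icc 1 n, modelX i : ℕ) : ℝ) := by
  push_cast
  rw [← prod_div_distrib]
  refine prod_congr rfl fun i hi => ?_
  have hx := two_le_modelX (mem_Icc.1 hi).1
  rw [Nat.cast_sub (by omega)]
  field_simp
  push_cast
  ring

theorem model_sieve_density_general (n : ℕ) :
    Filter.Tendsto (fun t : ℕ => (Lcount n t : ℝ) / t) Filter.atTop
      (nhds (∏ i ∈ Finset.Icc 1 n, (1 - 1 / (modelX i : ℝ)))) := by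
  have hP : 0 < ∏ i ∈ Icc 1 n, modelX i :=
    prod_pos fun i hi => by have := two_le_modelX (mem_Icc.1 hi).1; omega
  rw [prod_one_sub_one_div_modelX]
  exact tendsto_div_of_map_add hP fun t => by exact_mod_cast Lcount_add_prod n t

/-- The survivors of the first `n` stages of the model sieve have natural density
`d n = ∏_{i=1}^{n} (1 - 1/(x i))`. -/
theorem model_sieve_density (n : ℕ) (hn : 1 ≤ n) :
    Filter.Tendsto (fun t : ℕ => (Lcount n t : ℝ) / t) Filter.atTop
      (nhds (∏ i ∈ Finset.Icc 1 n, (1 - 1 / (modelX i : ℝ)))) :=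
  model_sieve_density_general n
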